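/- Let p be a prime and χ the standard additive character on ℚ_p. If ξ_0, ..., ξ_{m-1} ∈ ℚ_p and integers α_0, ..., α_{m-1} satisfy ∑_{j=0}^{m-1} α_j χ(ξ_j) = 0, then for every unit x ∈ ℤ_p^× (i.e., |x|_p = 1), ∑_{j=0}^{m-1} α_j χ(x·ξ_j) = 0. -/

import Mathlib

open Polynomial


open scoped BigOperators

/-- Every `p`-adic number is within distance `1` of a rational of the form `k / p^n`. -/
theorem padicFrac_exists (p : ℕ) [hp : Fact p.Prime] (x : ℚ_[p]) :
    ∃ kn : ℤ × ℕ, ‖x - (kn.1 : ℚ_[p]) / (p : ℚ_[p]) ^ kn.2‖ ≤ 1 := by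
  obtain ⟨n, hn⟩ := exists_nat_gt ‖x‖
  have hp1 : 1 < (p : ℝ) := by exact_mod_cast hp.out.one_lt
  have hple : (n : ℝ) < (p : ℝ) ^ n := by exact_mod_cast Nat.lt_pow_self (n := n) hp.out.one_lt
  have hz : ‖x * (p : ℚ_[p]) ^ n‖ ≤ 1 := by
    rw [norm_mul, norm_pow, Padic.norm_p]
    have h1 : ‖x‖ ≤ (p : ℝ) ^ n := le_of_lt (lt_trans hn hple)
    have h2 : (0:ℝ) < (p : ℝ) ^ n := by positivity
    calc ‖x‖ * ((p:ℝ)⁻¹) ^ n ≤ (p : ℝ) ^ n * ((p:ℝ)⁻¹) ^ n := by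
          gcongr
      _ = 1 := by rw [← mul_pow, mul_inv_cancel₀ (by positivity), one_pow]
  set z : ℤ_[p] := ⟨x * (p : ℚ_[p]) ^ n, hz⟩ with hzdef
  obtain ⟨y, hy⟩ := Ideal.mem_span_singleton'.mp (PadicInt.appr_spec n z)
  refine ⟨((z.appr n : ℤ), n), ?_⟩
  have hpne : ((p : ℚ_[p]) ^ n) ≠ 0 := by
    apply pow_ne_zero
    exact_mod_cast hp.out.ne_zero
  have hxz : x - ((z.appr n : ℤ) : ℚ_[p]) / (p : ℚ_[p]) ^ n
      = ((z - (z.appr n : ℤ_[p]) : ℤ_[p]) : ℚ_[p]) / (p : ℚ_[p]) ^ n := by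
    push_cast
    field_simp [hzdef]
    rfl
  rw [hxz, norm_div]
  have hnorm : ‖((z - (z.appr n : ℤ_[p]) : ℤ_[p]) : ℚ_[p])‖ ≤ ((p:ℝ)⁻¹) ^ n := by
    rw [← PadicInt.norm_def, ← hy]
    rw [norm_mul, norm_pow, PadicInt.norm_p]
    calc ‖y‖ * ((p:ℝ)⁻¹) ^ n ≤ 1 * ((p:ℝ)⁻¹) ^ n := by
          gcongr; exact y.2
      _ = ((p:ℝ)⁻¹) ^ n := one_mul _
  have hden : ‖(p : ℚ_[p]) ^ n‖ = ((p:ℝ)⁻¹) ^ n := by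
    rw [norm_pow, Padic.norm_p]
  rw [hden]
  rw [div_le_one (by positivity)]
  exact hnorm

/-- The standard additive character `χ(x) = e^{2πi {x}}` on `ℚ_p`, where `{x}` is
the `p`-adic fractional part of `x`. -/
noncomputable def stdChar (p : ℕ) [Fact p.Prime] (x : ℚ_[p]) : ℂ :=
  Complex.exp (2 * Real.pi * Complex.I *
    (((Classical.choose (padicFrac_exists p x)).1 : ℂ) /
      (p : ℂ) ^ (Classical.choose (padicFrac_exists p x)).2))

lemma stdChar_eq (p : ℕ) [hp : Fact p.Prime] (x : ℚ_[p]) (k : ℤ) (n : ℕ)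
    (h : ‖x - (k : ℚ_[p]) / (p : ℚ_[p]) ^ n‖ ≤ 1) :
    stdChar p x = Complex.exp (2 * Real.pi * Complex.I * ((k : ℂ) / (p : ℂ) ^ n)) := by
  have hppos : (0:ℝ) < (p:ℝ) := by exact_mod_cast hp.out.pos
  have hp0 : (p : ℚ_[p]) ≠ 0 := by exact_mod_cast hp.out.ne_zero
  have hpC : (p : ℂ) ≠ 0 := by exact_mod_cast hp.out.ne_zero
  set kn := Classical.choose (padicFrac_exists p x) with hkn
  have hspec : ‖x - (kn.1 : ℚ_[p]) / (p : ℚ_[p]) ^ kn.2‖ ≤ 1 :=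
    Classical.choose_spec (padicFrac_exists p x)
  set a : ℤ := kn.1 * p ^ n - k * p ^ kn.2 with ha
  set M : ℕ := kn.2 + n with hM
  have hfrac : ((a : ℚ_[p])) / (p : ℚ_[p]) ^ M
      = (x - (k : ℚ_[p]) / (p : ℚ_[p]) ^ n) - (x - (kn.1 : ℚ_[p]) / (p : ℚ_[p]) ^ kn.2) := by
    rw [ha, hM, pow_add]
    push_cast
    field_simp
    ring
  have hnorma : ‖(a : ℚ_[p])‖ ≤ (p : ℝ) ^ (-(M:ℤ)) := by
    have h1 : ‖((a : ℚ_[p])) / (p : ℚ_[p]) ^ M‖ ≤ 1 := by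
      rw [hfrac, sub_eq_add_neg]
      calc ‖(x - (k : ℚ_[p]) / (p : ℚ_[p]) ^ n) + -(x - (kn.1 : ℚ_[p]) / (p : ℚ_[p]) ^ kn.2)‖
          ≤ max ‖x - (k : ℚ_[p]) / (p : ℚ_[p]) ^ n‖ ‖-(x - (kn.1 : ℚ_[p]) / (p : ℚ_[p]) ^ kn.2)‖ :=
            Padic.nonarchimedean _ _
        _ ≤ 1 := by rw [norm_neg]; exact max_le h hspec
    rw [norm_div, norm_pow, Padic.norm_p, div_le_one (by positivity)] at h1
    rwa [zpow_neg, zpow_natCast, ← inv_pow]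
  obtain ⟨z, hz⟩ : ((p:ℤ) ^ M ∣ a) := (Padic.norm_int_le_pow_iff_dvd a M).1 hnorma
  -- complex identity: kn.1 / p^kn.2 = k / p^n + z
  have hC : ((kn.1 : ℂ)) / (p:ℂ) ^ kn.2 = (k:ℂ) / (p:ℂ) ^ n + (z:ℂ) := by
    have hzC : ((kn.1 : ℂ)) * (p:ℂ)^n - (k:ℂ) * (p:ℂ)^kn.2 = (p:ℂ)^M * (z:ℂ) := by
      have h2 := hz
      rw [ha] at h2
      exact_mod_cast h2
    field_simp [hM, pow_add] at hzC ⊢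
    linear_combination hzC
  show Complex.exp _ = _
  rw [hC, mul_add, Complex.exp_add, mul_comm (2 * (Real.pi:ℂ) * Complex.I) (z:ℂ),
    Complex.exp_int_mul_two_pi_mul_I, mul_one]

lemma zpow_emod_eq {ζ : ℂ} {Np : ℕ} (hNp : 0 < Np) (h1 : ζ ^ Np = 1) (hζ0 : ζ ≠ 0) (a : ℤ) :
    ζ ^ a = ζ ^ ((a % (Np:ℤ)).toNat) := by
  have hNe : (Np:ℤ) ≠ 0 := by exact_mod_cast hNp.ne'
  conv_lhs => rw [← Int.emod_add_mul_ediv a Np]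
  rw [zpow_add₀ hζ0, zpow_mul, zpow_natCast, h1, one_zpow, mul_one,
    ← zpow_natCast, Int.toNat_of_nonneg (Int.emod_nonneg a hNe)]

lemma key_alg (ζ : ℂ) (Np : ℕ) (hNp : 0 < Np) (hζ : IsPrimitiveRoot ζ Np)
    (u : ℕ) (hu : Nat.Coprime u Np) (m : ℕ) (α : Fin m → ℤ) (c : Fin m → ℤ)
    (h : ∑ j, (α j : ℂ) * ζ ^ (c j) = 0) :
    ∑ j, (α j : ℂ) * ζ ^ ((u:ℤ) * c j) = 0 := by
  have hζ0 : ζ ≠ 0 := hζ.ne_zero hNp.ne'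
  have h1 : ζ ^ Np = 1 := hζ.pow_eq_one
  set e : Fin m → ℕ := fun j => ((c j) % (Np:ℤ)).toNat with he
  have hmod : ∀ a b : ℤ, a % Np = b % Np → ζ ^ a = ζ ^ b := by
    intro a b hab
    rw [zpow_emod_eq hNp h1 hζ0 a, zpow_emod_eq hNp h1 hζ0 b, hab]
  set f : ℚ[X] := ∑ j, Polynomial.C ((α j : ℚ)) * Polynomial.X ^ (e j) with hf
  have haev : ∀ z : ℂ, (Polynomial.aeval z) f = ∑ j, (α j : ℂ) * z ^ e j := by
    intro z
    simp [hf, map_sum]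
  have hf0 : (Polynomial.aeval ζ) f = 0 := by
    rw [haev, ← h]
    refine Finset.sum_congr rfl fun j _ => ?_
    rw [zpow_emod_eq hNp h1 hζ0 (c j)]
  have hdvd : minpoly ℚ ζ ∣ f := minpoly.dvd ℚ ζ hf0
  obtain ⟨g, hg⟩ := hdvd
  have hprim : IsPrimitiveRoot (ζ ^ u) Np := hζ.pow_of_coprime u hu
  have hcyc : (Polynomial.aeval (ζ ^ u)) (minpoly ℚ ζ) = 0 := by
    rw [← Polynomial.cyclotomic_eq_minpoly_rat hζ hNp, Polynomial.aeval_def,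
      ← Polynomial.eval_map, Polynomial.map_cyclotomic]
    exact hprim.isRoot_cyclotomic hNp
  have hfu : (Polynomial.aeval (ζ ^ u)) f = 0 := by
    rw [hg, map_mul, hcyc, zero_mul]
  rw [haev] at hfu
  rw [← hfu]
  refine Finset.sum_congr rfl fun j _ => ?_
  congr 1
  have : (ζ ^ u) ^ e j = ζ ^ ((u:ℤ) * (e j : ℤ)) := by
    rw [← pow_mul, ← zpow_natCast]
    push_cast
    ring_nf
  rw [this]
  apply hmod
  have : (c j) % Np = (e j : ℤ) % Np := by
    rw [he]
    simp [Int.toNat_of_nonneg (Int.emod_nonneg _ (by exact_mod_cast hNp.ne' : (Np:ℤ) ≠ 0)), Int.emod_emod_of_dvd]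
  exact Int.ModEq.mul_left (u:ℤ) this

theorem stmt2 (p : ℕ) [Fact p.Prime] (m : ℕ) (ξ : Fin m → ℚ_[p]) (α : Fin m → ℤ)
    (h : ∑ j, (α j : ℂ) * stdChar p (ξ j) = 0) :
    ∀ x : ℚ_[p], ‖x‖ = 1 → ∑ j, (α j : ℂ) * stdChar p (x * ξ j) = 0 := by
  intro x hx
  have hp' : Fact p.Prime := inferInstance
  have hppos : (0:ℝ) < (p:ℝ) := by exact_mod_cast hp'.out.pos
  have hp1 : 1 < (p:ℝ) := by exact_mod_cast hp'.out.one_lt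
  have hpQ0 : (p : ℚ_[p]) ≠ 0 := by exact_mod_cast hp'.out.ne_zero
  have hpC0 : (p : ℂ) ≠ 0 := by exact_mod_cast hp'.out.ne_zero
  set K : Fin m → ℤ := fun j => (Classical.choose (padicFrac_exists p (ξ j))).1 with hK
  set nn : Fin m → ℕ := fun j => (Classical.choose (padicFrac_exists p (ξ j))).2 with hnn
  have spec : ∀ j, ‖ξ j - (K j : ℚ_[p]) / (p : ℚ_[p]) ^ (nn j)‖ ≤ 1 :=
    fun j => Classical.choose_spec (padicFrac_exists p (ξ j))
  obtain ⟨N, hN1, hnN⟩ : ∃ N : ℕ, 1 ≤ N ∧ ∀ j, nn j ≤ N :=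
    ⟨(Finset.univ.sup nn) + 1, Nat.le_add_left 1 _,
      fun j => le_trans (Finset.le_sup (Finset.mem_univ j)) (Nat.le_succ _)⟩
  have hNp : 0 < p ^ N := pow_pos hp'.out.pos N
  set ζ : ℂ := Complex.exp (2 * Real.pi * Complex.I / ((p:ℂ) ^ N)) with hζdef
  have hζ : IsPrimitiveRoot ζ (p ^ N) := by
    have := Complex.isPrimitiveRoot_exp (p ^ N) hNp.ne'
    convert this using 3
    push_cast
    ring
  set c : Fin m → ℤ := fun j => K j * (p:ℤ) ^ (N - nn j) with hc
  -- stdChar of ξ j in terms of ζ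
  have hpowC : ∀ j, ((p:ℂ)) ^ (N - nn j) * (p:ℂ) ^ (nn j) = (p:ℂ) ^ N := by
    intro j; rw [← pow_add, Nat.sub_add_cancel (hnN j)]
  have χ_eq : ∀ j, stdChar p (ξ j) = ζ ^ (c j) := by
    intro j
    rw [stdChar_eq p (ξ j) (K j) (nn j) (spec j), ← Complex.exp_int_mul]
    congr 1
    have hpow := hpowC j
    have hpn : ((p:ℂ)) ^ (nn j) ≠ 0 := pow_ne_zero _ hpC0
    have hpN : ((p:ℂ)) ^ N ≠ 0 := pow_ne_zero _ hpC0
    simp only [hc]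
    push_cast
    rw [← hpow]
    field_simp
  -- approximation of x by an integer u
  have hxle : ‖x‖ ≤ 1 := hx.le
  set X : ℤ_[p] := ⟨x, hxle⟩ with hX
  set u : ℕ := X.appr N with hu
  obtain ⟨y, hy⟩ := Ideal.mem_span_singleton'.mp (PadicInt.appr_spec N X)
  have hxu : ‖x - ((u:ℤ) : ℚ_[p])‖ ≤ ((p:ℝ)⁻¹) ^ N := by
    have : ((X - (u : ℤ_[p]) : ℤ_[p]) : ℚ_[p]) = x - ((u:ℤ):ℚ_[p]) := by
      rw [PadicInt.coe_sub]
      push_cast [hX]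
      rfl
    rw [← this, ← PadicInt.norm_def, ← hy, norm_mul, norm_pow, PadicInt.norm_p]
    calc ‖y‖ * ((p:ℝ)⁻¹) ^ N ≤ 1 * ((p:ℝ)⁻¹) ^ N := by gcongr; exact y.2
      _ = _ := one_mul _
  have hxult : ‖x - ((u:ℤ) : ℚ_[p])‖ < 1 :=
    lt_of_le_of_lt hxu (pow_lt_one₀ (by positivity) (inv_lt_one_of_one_lt₀ hp1) (by omega : N ≠ 0))
  -- u is a unit mod p
  have hpu : ¬ ((p:ℤ) ∣ (u:ℤ)) := by
    intro hdvd
    have h2 : ‖((u:ℤ) : ℚ_[p])‖ < 1 := Padic.norm_intCast_lt_one_iff.2 hdvd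
    have h3 : ‖x‖ ≤ max ‖x - ((u:ℤ):ℚ_[p])‖ ‖((u:ℤ):ℚ_[p])‖ := by
      calc ‖x‖ = ‖(x - ((u:ℤ):ℚ_[p])) + ((u:ℤ):ℚ_[p])‖ := by ring_nf
        _ ≤ _ := Padic.nonarchimedean _ _
    rw [hx] at h3
    have := max_lt hxult h2
    linarith [h3, this]
  have hcop : Nat.Coprime u (p ^ N) := by
    apply Nat.Coprime.pow_right
    rw [Nat.coprime_comm]
    exact (Nat.Prime.coprime_iff_not_dvd hp'.out).2 (by exact_mod_cast hpu)
  -- stdChar of x * ξ j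
  have hpowQ : ∀ j, ((p:ℚ_[p])) ^ (N - nn j) * (p:ℚ_[p]) ^ (nn j) = (p:ℚ_[p]) ^ N := by
    intro j; rw [← pow_add, Nat.sub_add_cancel (hnN j)]
  have χx_eq : ∀ j, stdChar p (x * ξ j) = ζ ^ ((u:ℤ) * c j) := by
    intro j
    have hbound : ‖x * ξ j - (((u:ℤ) * c j : ℤ) : ℚ_[p]) / (p : ℚ_[p]) ^ N‖ ≤ 1 := by
      have hrw : (((u:ℤ) * c j : ℤ) : ℚ_[p]) / (p : ℚ_[p]) ^ N
          = ((u:ℤ):ℚ_[p]) * ((K j : ℚ_[p]) / (p:ℚ_[p]) ^ (nn j)) := by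
        have hpow := hpowQ j
        have hpn : ((p:ℚ_[p])) ^ (nn j) ≠ 0 := pow_ne_zero _ hpQ0
        have hpN : ((p:ℚ_[p])) ^ N ≠ 0 := pow_ne_zero _ hpQ0
        simp only [hc]
        push_cast
        rw [← hpow]
        field_simp
      have hsplit : x * ξ j - (((u:ℤ) * c j : ℤ) : ℚ_[p]) / (p : ℚ_[p]) ^ N
          = x * (ξ j - (K j : ℚ_[p]) / (p:ℚ_[p]) ^ (nn j))
            + (x - ((u:ℤ):ℚ_[p])) * ((K j : ℚ_[p]) / (p:ℚ_[p]) ^ (nn j)) := by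
        rw [hrw]; ring
      rw [hsplit]
      refine le_trans (Padic.nonarchimedean _ _) (max_le ?_ ?_)
      · rw [norm_mul, hx, one_mul]; exact spec j
      · rw [norm_mul, norm_div, norm_pow, Padic.norm_p]
        have hK1 : ‖(K j : ℚ_[p])‖ ≤ 1 := Padic.norm_int_le_one _
        have hne : ((p:ℝ)⁻¹) ^ (nn j) ≠ 0 := by positivity
        calc ‖x - ((u:ℤ):ℚ_[p])‖ * (‖(K j : ℚ_[p])‖ / ((p:ℝ)⁻¹) ^ (nn j))
            ≤ ((p:ℝ)⁻¹) ^ N * (1 / ((p:ℝ)⁻¹) ^ (nn j)) := by gcongr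
          _ ≤ ((p:ℝ)⁻¹) ^ (nn j) * (1 / ((p:ℝ)⁻¹) ^ (nn j)) :=
              mul_le_mul_of_nonneg_right
                (pow_le_pow_of_le_one (by positivity) (inv_le_one_of_one_le₀ hp1.le) (hnN j))
                (by positivity)
          _ = 1 := by field_simp
    rw [stdChar_eq p (x * ξ j) ((u:ℤ) * c j) N hbound, ← Complex.exp_int_mul]
    congr 1
    push_cast
    ring
  -- conclude
  have h' : ∑ j, (α j : ℂ) * ζ ^ (c j) = 0 := by
    rw [← h]; exact Finset.sum_congr rfl fun j _ => by rw [χ_eq j]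
  have := key_alg ζ (p ^ N) hNp hζ u hcop m α c h'
  rw [← this]
  exact Finset.sum_congr rfl fun j _ => by rw [χx_eq j]
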